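/- Let f : ℝⁿ → ℝ be differentiable, m-strongly convex, and have L-Lipschitz gradient with 0 < m ≤ L. Let x ∈ ℝⁿ, let d ≠ 0 be a descent direction at x (⟨d, ∇f(x)⟩ < 0), and let c₂ ∈ (0, 1). Then there exists t₀ > 0 with ⟨d, ∇f(x + t₀ d)⟩ = 0 such that every t ∈ ℝ with |t − t₀| ≤ c₂(−⟨d, ∇f(x)⟩)/(L‖d‖²) satisfies the strong Wolfe curvature condition |⟨d, ∇f(x + t d)⟩| ≤ c₂ |⟨d, ∇f(x)⟩|. In particular, the set of step sizes satisfying the strong Wolfe curvature condition contains an interval of length at least 2 c₂(−⟨d, ∇f(x)⟩)/(L‖d‖²). -/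

import Mathlib

open scoped RealInnerProductSpace

/-
Along the line `t ↦ x + t • d`, the directional derivative `φ t = ⟪d, ∇f (x + t • d)⟫` grows at
rate at least `m‖d‖²` (strong convexity) and at most `L‖d‖²` (Lipschitz gradient). The first
bound and `φ 0 < 0` give a zero `t₀ > 0` by the intermediate value theorem; the second gives
`|φ t| ≤ L‖d‖² |t - t₀|`, which is at most `c₂ |φ 0|` on the stated interval.
-/

open Set
open scoped Gradient

section Line

variable {E : Type*} [NormedAddCommGroup E] [InnerProductSpace ℝ E] [CompleteSpace E]

theorem HasGradientAt.hasDerivAt_comp_add_smul {f : E → ℝ} {f' x d : E} {t : ℝ}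
    (h : HasGradientAt f f' (x + t • d)) :
    HasDerivAt (fun s : ℝ => f (x + s • d)) ⟪d, f'⟫ t := by
  have hline : HasDerivAt (fun s : ℝ => x + s • d) d t := by
    simpa using ((hasDerivAt_id t).smul_const d).const_add x
  rw [real_inner_comm]
  exact h.hasFDerivAt.comp_hasDerivAt t hline

theorem abs_inner_gradient_add_smul_sub_le {f : E → ℝ} {L : ℝ}
    (hlip : ∀ x y, ‖∇ f x - ∇ f y‖ ≤ L * ‖x - y‖) (x d : E) (s t : ℝ) :
    |⟪d, ∇ f (x + t • d)⟫ - ⟪d, ∇ f (x + s • d)⟫| ≤ L * ‖d‖ ^ 2 * |t - s| :=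
  calc |⟪d, ∇ f (x + t • d)⟫ - ⟪d, ∇ f (x + s • d)⟫|
      = |⟪d, ∇ f (x + t • d) - ∇ f (x + s • d)⟫| := by rw [inner_sub_right]
    _ ≤ ‖d‖ * ‖∇ f (x + t • d) - ∇ f (x + s • d)‖ := abs_real_inner_le_norm _ _
    _ ≤ ‖d‖ * (L * ‖(x + t • d) - (x + s • d)‖) := by gcongr; exact hlip _ _
    _ = L * ‖d‖ ^ 2 * |t - s| := by
      rw [add_sub_add_left_eq_sub, ← sub_smul, norm_smul, Real.norm_eq_abs]; ring

theorem inner_gradient_add_smul_add_le {f : E → ℝ} {m : ℝ} (hf : Differentiable ℝ f)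
    (hconv : ConvexOn ℝ univ (fun y => f y - m / 2 * ‖y‖ ^ 2)) (x d : E) {s t : ℝ}
    (hst : s ≤ t) :
    ⟪d, ∇ f (x + s • d)⟫ + m * ‖d‖ ^ 2 * (t - s) ≤ ⟪d, ∇ f (x + t • d)⟫ := by
  set ψ : ℝ → ℝ := fun u => f (x + u • d) - m / 2 * ‖x + u • d‖ ^ 2
  have hψ : ConvexOn ℝ univ ψ := by
    have h := hconv.comp_affineMap (AffineMap.lineMap x (x + d))
    rw [preimage_univ] at h
    refine h.congr fun u _ => ?_
    simp [ψ, AffineMap.lineMap_apply_module', add_comm]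
  have hψ' : ∀ u, HasDerivAt ψ (⟪d, ∇ f (x + u • d)⟫ - m / 2 * (2 * ⟪x + u • d, d⟫)) u :=
    fun u => (hf _).hasGradientAt.hasDerivAt_comp_add_smul.sub
      ((by simpa using ((hasDerivAt_id u).smul_const d).const_add x :
        HasDerivAt (fun s : ℝ => x + s • d) d u).norm_sq.const_mul _)
  have hmono := hψ.monotoneOn_deriv (fun u _ => (hψ' u).differentiableAt)
    (mem_univ s) (mem_univ t) hst
  rw [(hψ' s).deriv, (hψ' t).deriv] at hmono
  simp only [inner_add_left, real_inner_smul_left, real_inner_self_eq_norm_sq] at hmono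
  linear_combination hmono

end Line

theorem Continuous.exists_pos_eq_zero_of_add_mul_le {g : ℝ → ℝ} {μ : ℝ} (hg : Continuous g)
    (hμ : 0 < μ) (hgrow : ∀ t, 0 ≤ t → g 0 + μ * t ≤ g t) (hg0 : g 0 < 0) :
    ∃ t₀, 0 < t₀ ∧ g t₀ = 0 := by
  have hT : 0 ≤ -g 0 / μ := div_nonneg (by linarith) hμ.le
  have hgT : 0 ≤ g (-g 0 / μ) := by
    have := hgrow _ hT
    rwa [mul_div_cancel₀ _ hμ.ne', add_neg_cancel] at this
  obtain ⟨t₀, ht₀, hzero⟩ := intermediate_value_Icc hT hg.continuousOn ⟨hg0.le, hgT⟩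
  refine ⟨t₀, ht₀.1.lt_of_ne ?_, hzero⟩
  rintro rfl
  exact hg0.ne hzero

theorem stmt_17_general {n : ℕ} (f : EuclideanSpace ℝ (Fin n) → ℝ) (m L : ℝ)
    (hm : 0 < m) (hmL : m ≤ L)
    (hdiff : Differentiable ℝ f)
    (hconv : ConvexOn ℝ Set.univ (fun y => f y - m / 2 * ‖y‖ ^ 2))
    (hlip : ∀ x y, ‖gradient f x - gradient f y‖ ≤ L * ‖x - y‖)
    (x d : EuclideanSpace ℝ (Fin n)) (hd : d ≠ 0)
    (hdesc : ⟪d, gradient f x⟫ < 0)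
    (c₂ : ℝ) :
    ∃ t₀ : ℝ, 0 < t₀ ∧ ⟪d, gradient f (x + t₀ • d)⟫ = 0 ∧
      ∀ t : ℝ, |t - t₀| ≤ c₂ * (-⟪d, gradient f x⟫) / (L * ‖d‖ ^ 2) →
        |⟪d, gradient f (x + t • d)⟫| ≤ c₂ * |⟪d, gradient f x⟫| := by
  set φ : ℝ → ℝ := fun t => ⟪d, gradient f (x + t • d)⟫
  have hφ0 : φ 0 = ⟪d, gradient f x⟫ := by simp [φ]
  have hK : 0 < L * ‖d‖ ^ 2 := by have := hm.trans_le hmL; positivity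
  have hφlip := abs_inner_gradient_add_smul_sub_le hlip x d
  have hφcont : Continuous φ :=
    (LipschitzWith.of_dist_le' fun s t => by
      simpa only [Real.dist_eq, abs_sub_comm] using hφlip t s).continuous
  obtain ⟨t₀, ht₀, hzero⟩ := hφcont.exists_pos_eq_zero_of_add_mul_le (μ := m * ‖d‖ ^ 2)
    (by positivity) (fun t ht => by
      simpa only [φ, zero_smul, add_zero, sub_zero] using
        inner_gradient_add_smul_add_le hdiff hconv x d ht)
    (hφ0 ▸ hdesc)
  refine ⟨t₀, ht₀, hzero, fun t ht => ?_⟩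
  calc |φ t| = |φ t - φ t₀| := by rw [hzero, sub_zero]
    _ ≤ L * ‖d‖ ^ 2 * |t - t₀| := hφlip t₀ t
    _ ≤ c₂ * -⟪d, gradient f x⟫ := (le_div_iff₀' hK).mp ht
    _ = c₂ * |⟪d, gradient f x⟫| := by rw [abs_of_neg hdesc]

/-- The set of step sizes satisfying the strong Wolfe curvature condition contains an
interval of radius `c₂(−⟨d, ∇f(x)⟩)/(L‖d‖²)` around the step size `t₀` at which the
directional derivative along the line vanishes. -/
theorem stmt_17 {n : ℕ} (f : EuclideanSpace ℝ (Fin n) → ℝ) (m L : ℝ)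
    (hm : 0 < m) (hmL : m ≤ L)
    (hdiff : Differentiable ℝ f)
    (hconv : ConvexOn ℝ Set.univ (fun y => f y - m / 2 * ‖y‖ ^ 2))
    (hlip : ∀ x y, ‖gradient f x - gradient f y‖ ≤ L * ‖x - y‖)
    (x d : EuclideanSpace ℝ (Fin n)) (hd : d ≠ 0)
    (hdesc : ⟪d, gradient f x⟫ < 0)
    (c₂ : ℝ) (hc₂ : c₂ ∈ Set.Ioo (0 : ℝ) 1) :
    ∃ t₀ : ℝ, 0 < t₀ ∧ ⟪d, gradient f (x + t₀ • d)⟫ = 0 ∧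
      ∀ t : ℝ, |t - t₀| ≤ c₂ * (-⟪d, gradient f x⟫) / (L * ‖d‖ ^ 2) →
        |⟪d, gradient f (x + t • d)⟫| ≤ c₂ * |⟪d, gradient f x⟫| :=
  stmt_17_general f m L hm hmL hdiff hconv hlip x d hd hdesc c₂
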